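/- Let E_n denote the number of alternating permutations of {1,…,n}, i.e., permutations σ with σ(1) < σ(2) > σ(3) < σ(4) > ⋯. Then lim_{n→∞} (E_n / n!)^{1/n} = 2/π. -/

import Mathlib

/-!
Reflecting the odd coordinates, `x i ↦ 1 - x i`, maps the alternating points
`x 0 < x 1 > x 2 < ⋯` of the unit cube onto the points with `y i + y (i + 1) < 1`. The cube is cut,
up to a null set, into the `n!` congruent cells on which `x ∘ σ` is increasing, and the alternating
points fill exactly the cells of the alternating `σ⁻¹`, so this region has volume `E_n / n!`.

Integrating out the first coordinate, the volume `f n t` of the region with an extra zeroth term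
`t` satisfies `f (n + 1) t = ∫₀^{1-t} f n`. This integral operator is monotone and has eigenfunction
`cos (π t / 2)` with eigenvalue `2 / π`; comparing with `f 0 = 1 ≥ cos (π t / 2)` and with
`f 1 t = 1 - t ≤ cos (π t / 2)` gives `(2 / π) ^ n ≤ E_n / n! ≤ (2 / π) ^ (n - 1)`.
-/

open Filter

/-- `zigzag n` is the `n`-th Euler (zigzag) number: the number of alternating permutations
`σ` of `{1,…,n}` (modeled as `Fin n`, zero-based) with `σ(1) < σ(2) > σ(3) < σ(4) > ⋯`. -/
noncomputable def zigzag (n : ℕ) : ℕ :=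
  Nat.card {σ : Equiv.Perm (Fin n) //
    ∀ i : ℕ, ∀ h : i + 1 < n,
      if i % 2 = 0 then σ ⟨i, Nat.lt_of_succ_lt h⟩ < σ ⟨i + 1, h⟩
      else σ ⟨i + 1, h⟩ < σ ⟨i, Nat.lt_of_succ_lt h⟩}

open MeasureTheory Set Real Function

noncomputable section

def zigzagVolume : ℕ → ℝ → ℝ
  | 0, _ => 1
  | n + 1, t => ∫ s in (0 : ℝ)..1 - t, zigzagVolume n s

lemma zigzagVolume_succ (n : ℕ) (t : ℝ) :
    zigzagVolume (n + 1) t = ∫ s in (0 : ℝ)..1 - t, zigzagVolume n s := rfl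

lemma continuous_zigzagVolume : ∀ n, Continuous (zigzagVolume n)
  | 0 => continuous_const
  | n + 1 => (intervalIntegral.continuous_primitive
      (fun _ _ => (continuous_zigzagVolume n).intervalIntegrable _ _) 0).comp
      (continuous_const.sub continuous_id)

lemma integral_cos_pi_div_two_mul (t : ℝ) :
    ∫ s in (0 : ℝ)..1 - t, cos (π / 2 * s) = 2 / π * cos (π / 2 * t) := by
  rw [intervalIntegral.integral_comp_mul_left (fun x => cos x) (by positivity), integral_cos,
    smul_eq_mul, mul_zero, sin_zero, sub_zero, inv_div, mul_one_sub, ← cos_pi_div_two_sub]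
  ring_nf

lemma integral_le_integral_of_le_on_unitInterval {f g : ℝ → ℝ} (hf : Continuous f)
    (hg : Continuous g) (hfg : ∀ s ∈ Icc (0 : ℝ) 1, f s ≤ g s) {t : ℝ} (ht : t ∈ Icc (0 : ℝ) 1) :
    ∫ s in (0 : ℝ)..1 - t, f s ≤ ∫ s in (0 : ℝ)..1 - t, g s :=
  intervalIntegral.integral_mono_on (by linarith [ht.2]) (hf.intervalIntegrable _ _)
    (hg.intervalIntegrable _ _) fun s hs => hfg s ⟨hs.1, by linarith [hs.2, ht.1]⟩

lemma pow_mul_cos_le_zigzagVolume (n : ℕ) {t : ℝ} (ht : t ∈ Icc (0 : ℝ) 1) :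
    (2 / π) ^ n * cos (π / 2 * t) ≤ zigzagVolume n t := by
  induction n generalizing t with
  | zero => simpa [zigzagVolume] using cos_le_one _
  | succ n ih =>
    calc (2 / π) ^ (n + 1) * cos (π / 2 * t)
        = ∫ s in (0 : ℝ)..1 - t, (2 / π) ^ n * cos (π / 2 * s) := by
          rw [intervalIntegral.integral_const_mul, integral_cos_pi_div_two_mul]; ring
      _ ≤ zigzagVolume (n + 1) t :=
          integral_le_integral_of_le_on_unitInterval (by fun_prop)
            (continuous_zigzagVolume n) (fun s hs => ih hs) ht

lemma zigzagVolume_succ_le_pow_mul_cos (n : ℕ) {t : ℝ} (ht : t ∈ Icc (0 : ℝ) 1) :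
    zigzagVolume (n + 1) t ≤ (2 / π) ^ n * cos (π / 2 * t) := by
  induction n generalizing t with
  | zero =>
    -- Jordan's inequality `x ≤ sin (π / 2 * x)` on `[0, 1]`, at `x = 1 - t`
    have h := le_sin_mul (x := 1 - t) (by linarith [ht.2]) (by linarith [ht.1])
    rw [mul_one_sub, sin_pi_div_two_sub] at h
    simpa [zigzagVolume_succ, zigzagVolume] using h
  | succ n ih =>
    calc zigzagVolume (n + 2) t
        ≤ ∫ s in (0 : ℝ)..1 - t, (2 / π) ^ n * cos (π / 2 * s) :=
          integral_le_integral_of_le_on_unitInterval (continuous_zigzagVolume _) (by fun_prop)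
            (fun s hs => ih hs) ht
      _ = (2 / π) ^ (n + 1) * cos (π / 2 * t) := by
          rw [intervalIntegral.integral_const_mul, integral_cos_pi_div_two_mul]; ring

lemma zigzagVolume_nonneg (n : ℕ) {t : ℝ} (ht : t ∈ Icc (0 : ℝ) 1) : 0 ≤ zigzagVolume n t := by
  refine le_trans (mul_nonneg (by positivity) (cos_nonneg_of_mem_Icc ⟨?_, ?_⟩))
    (pow_mul_cos_le_zigzagVolume n ht) <;> nlinarith [pi_pos, ht.1, ht.2]

def unitCube (n : ℕ) : Set (Fin n → ℝ) := univ.pi fun _ => Ioo 0 1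

lemma isOpen_unitCube (n : ℕ) : IsOpen (unitCube n) :=
  isOpen_set_pi finite_univ fun _ _ => isOpen_Ioo

lemma volume_unitCube (n : ℕ) : volume (unitCube n) = 1 := by
  simp [unitCube, volume_pi_pi]

def zigzagRegion (n : ℕ) (t : ℝ) : Set (Fin n → ℝ) :=
  {y | y ∈ unitCube n ∧ ∀ i : Fin n, (Fin.cons t y : Fin (n + 1) → ℝ) i.castSucc + y i < 1}

lemma isOpen_setOf_mem_zigzagRegion (n : ℕ) :
    IsOpen {p : ℝ × (Fin n → ℝ) | p.2 ∈ zigzagRegion n p.1} := by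
  have : {p : ℝ × (Fin n → ℝ) | p.2 ∈ zigzagRegion n p.1} = Prod.snd ⁻¹' unitCube n ∩
      ⋂ i : Fin n, {p | (Fin.cons p.1 p.2 : Fin (n + 1) → ℝ) i.castSucc + p.2 i < 1} := by
    ext; simp [zigzagRegion]
  have hcons : Continuous fun p : ℝ × (Fin n → ℝ) => (Fin.cons p.1 p.2 : Fin (n + 1) → ℝ) :=
    Continuous.finCons (A := fun _ => ℝ) continuous_fst continuous_snd
  rw [this]
  exact ((isOpen_unitCube n).preimage continuous_snd).inter <|
    isOpen_iInter_of_finite fun i => isOpen_lt (by fun_prop) continuous_const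

lemma isOpen_zigzagRegion (n : ℕ) (t : ℝ) : IsOpen (zigzagRegion n t) :=
  (isOpen_setOf_mem_zigzagRegion n).preimage (Continuous.prodMk_right t)

lemma mem_zigzagRegion_succ {n : ℕ} {t : ℝ} {y : Fin (n + 1) → ℝ} :
    y ∈ zigzagRegion (n + 1) t ↔
      y 0 ∈ Ioo 0 1 ∧ t + y 0 < 1 ∧ Fin.tail y ∈ zigzagRegion n (y 0) := by
  simp [zigzagRegion, unitCube, Fin.forall_fin_succ, Fin.tail]
  tauto

lemma volume_zigzagRegion_succ (n : ℕ) {t : ℝ} (ht : 0 ≤ t) :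
    volume (zigzagRegion (n + 1) t) = ∫⁻ s in Ioo 0 (1 - t), volume (zigzagRegion n s) := by
  set I := Ioo (0 : ℝ) (1 - t)
  set S := {p : ℝ × (Fin n → ℝ) | p.1 ∈ I ∧ p.2 ∈ zigzagRegion n p.1}
  have hS : MeasurableSet S :=
    (measurableSet_Ioo.preimage measurable_fst).inter
      (isOpen_setOf_mem_zigzagRegion n).measurableSet
  have hpre : zigzagRegion (n + 1) t = MeasurableEquiv.piFinSuccAbove (fun _ => ℝ) 0 ⁻¹' S := by
    ext y
    simp only [mem_zigzagRegion_succ, S, I, mem_preimage, mem_ofPred_eq, mem_Ioo,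
      MeasurableEquiv.piFinSuccAbove_apply, Fin.insertNthEquiv_symm_apply, Fin.removeNth_zero]
    constructor
    · rintro ⟨h0, h1, h2⟩; exact ⟨⟨h0.1, by linarith⟩, h2⟩
    · rintro ⟨h0, h2⟩; exact ⟨⟨h0.1, by linarith⟩, by linarith [h0.2], h2⟩
  have hslice (s : ℝ) : volume (Prod.mk s ⁻¹' S) =
      I.indicator (fun s => volume (zigzagRegion n s)) s := by
    by_cases hs : s ∈ I <;> simp [S, hs]
  rw [hpre, (volume_preserving_piFinSuccAbove (fun _ => ℝ) 0).measure_preimage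
    hS.nullMeasurableSet, Measure.volume_eq_prod, Measure.prod_apply hS]
  simp_rw [hslice]
  exact lintegral_indicator measurableSet_Ioo _

lemma volume_zigzagRegion (n : ℕ) {t : ℝ} (ht : t ∈ Icc (0 : ℝ) 1) :
    volume (zigzagRegion n t) = ENNReal.ofReal (zigzagVolume n t) := by
  induction n generalizing t with
  | zero => simp [zigzagRegion, unitCube, zigzagVolume, volume_pi]
  | succ n ih =>
    have hmem {s : ℝ} (hs : s ∈ Ioo 0 (1 - t)) : s ∈ Icc (0 : ℝ) 1 :=
      ⟨hs.1.le, by linarith [hs.2, ht.1]⟩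
    rw [volume_zigzagRegion_succ n ht.1, setLIntegral_congr_fun measurableSet_Ioo
      fun s hs => ih (hmem hs), ← ofReal_integral_eq_lintegral_ofReal, zigzagVolume_succ,
      intervalIntegral.integral_of_le (by linarith [ht.2]), integral_Ioc_eq_integral_Ioo]
    · exact (continuous_zigzagVolume n).integrableOn_Icc.mono_set Ioo_subset_Icc_self
    · exact (ae_restrict_iff' measurableSet_Ioo).2 <| .of_forall fun s hs =>
        zigzagVolume_nonneg n (hmem hs)

def orderCell {n : ℕ} (σ : Equiv.Perm (Fin n)) : Set (Fin n → ℝ) :=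
  {x | x ∈ unitCube n ∧ StrictMono (x ∘ σ)}

lemma measurableSet_orderCell {n : ℕ} (σ : Equiv.Perm (Fin n)) : MeasurableSet (orderCell σ) := by
  have : orderCell σ = unitCube n ∩ ⋂ (i) (j) (_ : i < j), {x | x (σ i) < x (σ j)} := by
    ext x; simp [orderCell, StrictMono]
  rw [this]
  exact (isOpen_unitCube n).measurableSet.inter <| .iInter fun i => .iInter fun j =>
    .iInter fun _ => measurableSet_lt (measurable_pi_apply _) (measurable_pi_apply _)

lemma injective_of_mem_orderCell {n : ℕ} {σ : Equiv.Perm (Fin n)} {x : Fin n → ℝ}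
    (hx : x ∈ orderCell σ) : Injective x := by
  simpa using hx.2.injective.comp σ.symm.injective

lemma pairwise_disjoint_orderCell {n : ℕ} : Pairwise (Disjoint on orderCell (n := n)) := by
  intro σ τ hne
  refine disjoint_left.2 fun x ⟨_, hσ⟩ ⟨_, hτ⟩ => hne <| DFunLike.coe_injective ?_
  exact (injective_of_mem_orderCell ⟨‹_›, hσ⟩).comp_left
    (Tuple.unique_monotone hσ.monotone hτ.monotone)

lemma exists_mem_orderCell {n : ℕ} {x : Fin n → ℝ} (hx : x ∈ unitCube n) (hinj : Injective x) :
    ∃ σ, x ∈ orderCell σ :=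
  ⟨Tuple.sort x, hx, (Tuple.monotone_sort x).strictMono_of_injective
    (hinj.comp (Tuple.sort x).injective)⟩

lemma volume_orderCell_eq {n : ℕ} (σ : Equiv.Perm (Fin n)) :
    volume (orderCell σ) = volume (orderCell (1 : Equiv.Perm (Fin n))) := by
  have hmp := volume_preserving_arrowCongr' σ.symm (MeasurableEquiv.refl ℝ) (.id _)
  have : orderCell σ = MeasurableEquiv.arrowCongr' σ.symm (MeasurableEquiv.refl ℝ) ⁻¹'
      orderCell 1 := by
    ext x
    change _ ↔ x ∘ σ ∈ orderCell 1
    simp [orderCell, unitCube, σ.forall_congr_right (q := fun i => 0 < x i ∧ x i < 1)]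
  rw [this, hmp.measure_preimage (measurableSet_orderCell 1).nullMeasurableSet]

lemma volume_setOf_not_injective (n : ℕ) : volume {x : Fin n → ℝ | ¬ Injective x} = 0 := by
  have : {x : Fin n → ℝ | ¬ Injective x} ⊆ ⋃ (i) (j) (_ : i ≠ j),
      (LinearMap.ker (LinearMap.proj (R := ℝ) (φ := fun _ : Fin n => ℝ) i - LinearMap.proj j) :
        Set (Fin n → ℝ)) := by
    intro x hx
    simp only [Injective, not_forall] at hx
    obtain ⟨i, j, hij, hne⟩ := hx
    simp only [mem_iUnion, SetLike.mem_coe, LinearMap.mem_ker]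
    exact ⟨i, j, hne, sub_eq_zero.2 hij⟩
  refine measure_mono_null this <| measure_iUnion_null fun i => measure_iUnion_null fun j =>
    measure_iUnion_null fun hij => Measure.addHaar_submodule _ _ fun h => hij ?_
  by_contra hne
  simpa [Pi.single_apply, hne] using LinearMap.congr_fun (LinearMap.ker_eq_top.1 h) (Pi.single i 1)

lemma unitCube_inter_injective_eq_iUnion (n : ℕ) :
    unitCube n ∩ {x | Injective x} = ⋃ σ : Equiv.Perm (Fin n), orderCell σ := by
  ext x
  simp only [mem_inter_iff, mem_iUnion]
  exact ⟨fun ⟨hx, hinj⟩ => exists_mem_orderCell hx hinj,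
    fun ⟨σ, hσ⟩ => ⟨hσ.1, injective_of_mem_orderCell hσ⟩⟩

lemma volume_orderCell {n : ℕ} (σ : Equiv.Perm (Fin n)) :
    volume (orderCell σ) = (n.factorial : ENNReal)⁻¹ := by
  have := measure_inter_conull (s := unitCube n) (t := {x | Injective x})
    (volume_setOf_not_injective n)
  rw [unitCube_inter_injective_eq_iUnion, volume_unitCube,
    measure_iUnion pairwise_disjoint_orderCell measurableSet_orderCell] at this
  simp_rw [volume_orderCell_eq] at this
  rw [tsum_fintype, Finset.sum_const, Finset.card_univ, Fintype.card_perm, Fintype.card_fin,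
    nsmul_eq_mul, mul_comm] at this
  rw [volume_orderCell_eq, ENNReal.eq_inv_of_mul_eq_one_left this]

def IsAlternating {α : Type*} [LT α] {n : ℕ} (f : Fin (n + 1) → α) : Prop :=
  ∀ i : Fin n, if Even (i : ℕ) then f i.castSucc < f i.succ else f i.succ < f i.castSucc

lemma zigzag_succ_eq_card (n : ℕ) :
    zigzag (n + 1) = Nat.card {σ : Equiv.Perm (Fin (n + 1)) // IsAlternating σ} := by
  refine Nat.card_congr (Equiv.subtypeEquivRight fun σ => ⟨fun h i => ?_, fun h i hi => ?_⟩)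
  · simp only [Nat.even_iff]; exact h i (by omega)
  · have := h ⟨i, by omega⟩; simp only [Nat.even_iff] at this; exact this

lemma StrictMono.isAlternating_comp_iff {α β : Type*} [LinearOrder α] [Preorder β] {g : α → β}
    (hg : StrictMono g) {n : ℕ} {f : Fin (n + 1) → α} :
    IsAlternating (g ∘ f) ↔ IsAlternating f := by
  simp only [IsAlternating, comp_apply, hg.lt_iff_lt]

lemma isAlternating_iff_of_mem_orderCell {n : ℕ} {σ : Equiv.Perm (Fin (n + 1))}
    {x : Fin (n + 1) → ℝ} (hx : x ∈ orderCell σ) : IsAlternating x ↔ IsAlternating σ.symm := by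
  simpa [comp_assoc] using hx.2.isAlternating_comp_iff (f := σ.symm)

lemma volume_unitCube_inter_isAlternating (n : ℕ) :
    volume {x | x ∈ unitCube (n + 1) ∧ IsAlternating x} =
      zigzag (n + 1) / ((n + 1).factorial : ENNReal) := by
  classical
  have hcells : {x | x ∈ unitCube (n + 1) ∧ IsAlternating x} ∩ {x | Injective x} =
      ⋃ σ : {σ : Equiv.Perm (Fin (n + 1)) // IsAlternating σ.symm}, orderCell σ.1 := by
    ext x
    simp only [mem_inter_iff, mem_ofPred_eq, mem_iUnion, Subtype.exists, exists_prop]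
    constructor
    · rintro ⟨⟨hx, halt⟩, hinj⟩
      obtain ⟨σ, hσ⟩ := exists_mem_orderCell hx hinj
      exact ⟨σ, (isAlternating_iff_of_mem_orderCell hσ).1 halt, hσ⟩
    · rintro ⟨σ, halt, hσ⟩
      exact ⟨⟨hσ.1, (isAlternating_iff_of_mem_orderCell hσ).2 halt⟩, injective_of_mem_orderCell hσ⟩
  have hcard :
      Nat.card {σ : Equiv.Perm (Fin (n + 1)) // IsAlternating σ.symm} = zigzag (n + 1) := by
    rw [zigzag_succ_eq_card]
    exact Nat.card_congr (Equiv.subtypeEquiv (Equiv.inv _) fun _ => Iff.rfl)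
  rw [← measure_inter_conull (t := {x | Injective x}) (volume_setOf_not_injective _), hcells,
    measure_iUnion (pairwise_disjoint_orderCell.comp_of_injective Subtype.val_injective)
      fun _ => measurableSet_orderCell _]
  simp only [volume_orderCell, tsum_fintype, Finset.sum_const, Finset.card_univ, nsmul_eq_mul,
    Fintype.card_eq_nat_card, hcard, div_eq_mul_inv]

def reflectOdd (n : ℕ) (x : Fin n → ℝ) : Fin n → ℝ :=
  fun i => if Even (i : ℕ) then x i else 1 - x i

lemma measurePreserving_reflectOdd (n : ℕ) : MeasurePreserving (reflectOdd n) :=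
  volume_preserving_pi (f := fun (i : Fin n) (a : ℝ) => if Even (i : ℕ) then a else 1 - a)
    fun i => by
      split_ifs
      · exact .id _
      · exact Measure.measurePreserving_sub_left _ 1

lemma reflectOdd_mem_unitCube_iff {n : ℕ} {x : Fin n → ℝ} :
    reflectOdd n x ∈ unitCube n ↔ x ∈ unitCube n := by
  simp only [unitCube, mem_univ_pi, reflectOdd]
  refine forall_congr' fun i => ?_
  split_ifs
  · rfl
  · simp only [mem_Ioo]; constructor <;> rintro ⟨_, _⟩ <;> constructor <;> linarith

lemma reflectOdd_add_lt_one_iff {n : ℕ} (x : Fin (n + 1) → ℝ) (i : Fin n) :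
    reflectOdd _ x i.castSucc + reflectOdd _ x i.succ < 1 ↔
      if Even (i : ℕ) then x i.castSucc < x i.succ else x i.succ < x i.castSucc := by
  simp only [reflectOdd, Fin.val_castSucc, Fin.val_succ, Nat.even_add_one]
  split_ifs <;> constructor <;> intro <;> linarith

lemma reflectOdd_preimage_zigzagRegion (n : ℕ) :
    reflectOdd (n + 1) ⁻¹' zigzagRegion (n + 1) 0 =
      {x | x ∈ unitCube (n + 1) ∧ IsAlternating x} := by
  ext x
  simp only [zigzagRegion, mem_preimage, mem_ofPred_eq, reflectOdd_mem_unitCube_iff,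
    Fin.forall_fin_succ, Fin.cons_zero, Fin.castSucc_zero, ← Fin.succ_castSucc, Fin.cons_succ,
    reflectOdd_add_lt_one_iff, zero_add]
  refine ⟨fun ⟨hx, _, halt⟩ => ⟨hx, halt⟩, fun ⟨hx, halt⟩ => ⟨hx, ?_, halt⟩⟩
  simpa [reflectOdd] using (hx 0 (mem_univ 0)).2

lemma zigzag_div_factorial (n : ℕ) :
    (zigzag (n + 1) : ℝ) / (n + 1).factorial = zigzagVolume (n + 1) 0 := by
  have h := volume_zigzagRegion (n + 1) (t := 0) ⟨le_rfl, zero_le_one⟩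
  rw [← (measurePreserving_reflectOdd _).measure_preimage
    (isOpen_zigzagRegion _ _).measurableSet.nullMeasurableSet,
    reflectOdd_preimage_zigzagRegion, volume_unitCube_inter_isAlternating] at h
  have := congrArg ENNReal.toReal h
  rwa [ENNReal.toReal_div, ENNReal.toReal_natCast, ENNReal.toReal_natCast,
    ENNReal.toReal_ofReal (zigzagVolume_nonneg _ ⟨le_rfl, zero_le_one⟩)] at this

lemma tendsto_mul_pow_rpow_one_div {b c : ℝ} (hb : 0 < b) (hc : 0 ≤ c) :
    Tendsto (fun n : ℕ => (b * c ^ n) ^ (1 / (n : ℝ))) atTop (nhds c) := by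
  have hroot : Tendsto (fun n : ℕ => b ^ (1 / (n : ℝ))) atTop (nhds 1) := by
    simpa [comp_def] using
      (continuousAt_const_rpow hb.ne').tendsto.comp tendsto_one_div_atTop_nhds_zero_nat
  refine (one_mul c ▸ hroot.mul_const c).congr' ?_
  filter_upwards [eventually_ne_atTop 0] with n hn
  rw [mul_rpow hb.le (by positivity), one_div, pow_rpow_inv_natCast hc hn]

lemma tendsto_rpow_one_div_of_le_of_le {a : ℕ → ℝ} {b c C : ℝ} (hb : 0 < b) (hc : 0 < c)
    (hlow : ∀ᶠ n in atTop, b * c ^ n ≤ a n) (hup : ∀ᶠ n in atTop, a n ≤ C * c ^ n) :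
    Tendsto (fun n : ℕ => a n ^ (1 / (n : ℝ))) atTop (nhds c) := by
  obtain ⟨m, hlow_m, hup_m⟩ := (hlow.and hup).exists
  have hC : 0 < C := hb.trans_le <| le_of_mul_le_mul_right (hlow_m.trans hup_m) (by positivity)
  refine tendsto_of_tendsto_of_tendsto_of_le_of_le' (tendsto_mul_pow_rpow_one_div hb hc.le)
    (tendsto_mul_pow_rpow_one_div hC hc.le) ?_ ?_
  · filter_upwards [hlow] with n hn
    exact rpow_le_rpow (by positivity) hn (by positivity)
  · filter_upwards [hlow, hup] with n hn hn'
    exact rpow_le_rpow ((by positivity : 0 ≤ b * c ^ n).trans hn) hn' (by positivity)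

end

theorem stmt18 :
    Tendsto (fun n : ℕ => ((zigzag n : ℝ) / (Nat.factorial n : ℝ)) ^ (1 / (n : ℝ)))
      atTop (nhds (2 / Real.pi)) := by
  refine tendsto_rpow_one_div_of_le_of_le (b := 1) (C := π / 2) one_pos (by positivity) ?_ ?_ <;>
    filter_upwards [eventually_ge_atTop 1] with n hn <;>
    obtain ⟨m, rfl⟩ := Nat.exists_eq_add_of_le' hn <;>
    rw [zigzag_div_factorial]
  · simpa using pow_mul_cos_le_zigzagVolume (m + 1) (t := 0) ⟨le_rfl, zero_le_one⟩
  · calc zigzagVolume (m + 1) 0 ≤ (2 / π) ^ m := by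
          simpa using zigzagVolume_succ_le_pow_mul_cos m (t := 0) ⟨le_rfl, zero_le_one⟩
      _ = π / 2 * (2 / π) ^ (m + 1) := by rw [pow_succ]; field_simp [pi_ne_zero]
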